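/- arXiv:2507.04968 — 2 statements merged into one kernel-verified Lean document; each statement's English description precedes it below -/
import Mathlib

section
/- Under the condition p < M(q r + (1-q) r'), the Lyapunov function θ(x) = x satisfies the Foster–Lyapunov conditions for the induced chain: (i) inf_x θ(x) > −∞; (ii) Σ_y p_{xy} θ(y) < ∞ for x in the finite set {0,1,…,M−1}; and (iii) there exists ε > 0 such that Σ_y p_{xy}(θ(y) − θ(x)) ≤ −ε for all x ≥ M. Consequently, the chain is positive recurrent. -/
/-!
Start the chain at `0`. It moves up by at most one step, so the drift bound gives
`E X_{n+1} ≤ E X_n - ε + (1 + ε) P(X_n < M)` with `ε = M(qr + (1-q)r') - p`; summing over `n`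
and using `X_N ≥ 0`, the Cesàro averages of the laws of `X_n` keep mass at least `ε / (1 + ε)`
on `{0, …, M-1}`. Every state is entered from finitely many states, so `μ ↦ μP` is continuous
for pointwise convergence, and a pointwise limit point of the Cesàro averages (Tychonoff) is a
nonzero invariant measure of mass at most one. Normalising it gives the stationary law.
-/

open Finset

/-- Probability that exactly `d` of the `M` mini-slot departures occur, under
the mixture of `Bin(M,r)` (jamming, prob. `q`) and `Bin(M,r')` (no jamming). -/
noncomputable def mixP (M : ℕ) (q r r' : ℝ) (d : ℕ) : ℝ :=
  (M.choose d : ℝ) * (r ^ d * (1 - r) ^ (M - d) * q + r' ^ d * (1 - r') ^ (M - d) * (1 - q))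

/-- Departure distribution truncated at `min x M` when `x` users are present. -/
noncomputable def Pd (M : ℕ) (q r r' : ℝ) (x d : ℕ) : ℝ :=
  if d < min x M then mixP M q r r' d
  else if d = min x M then ∑ e ∈ Finset.Icc (min x M) M, mixP M q r r' e
  else 0

/-- Transition kernel of the number of users at a BS under a stationary
admission policy `u`: departures `D` with law `Pd`, and an arrival admitted
(`u x = 1`) with probability `p`. -/
noncomputable def transP (M : ℕ) (q r r' p : ℝ) (u : ℕ → ℕ) (x y : ℕ) : ℝ :=
  ∑ d ∈ Finset.range (min x M + 1),
    Pd M q r r' x d *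
      (p * (if y = x - d + u x then 1 else 0)
        + (1 - p) * (if y = x - d then 1 else 0))

open Filter Topology Polynomial

/-- The row vector `μ P`. Every use has `μ` or the column `P · y` finitely supported, so the
`tsum` is a finite sum. -/
noncomputable def stepLaw (P : ℕ → ℕ → ℝ) (μ : ℕ → ℝ) (y : ℕ) : ℝ :=
  ∑' x, μ x * P x y

section StepLaw

variable {P : ℕ → ℕ → ℝ}

lemma stepLaw_eq_sum {s : Finset ℕ} {y : ℕ} (μ : ℕ → ℝ) (hs : ∀ x ∉ s, P x y = 0) :
    stepLaw P μ y = ∑ x ∈ s, μ x * P x y :=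
  tsum_eq_sum fun x hx => by rw [hs x hx, mul_zero]

lemma stepLaw_eq_sum_of_support {s : Finset ℕ} {μ : ℕ → ℝ} (hμ : ∀ x ∉ s, μ x = 0) (y : ℕ) :
    stepLaw P μ y = ∑ x ∈ s, μ x * P x y :=
  tsum_eq_sum fun x hx => by rw [hμ x hx, zero_mul]

lemma stepLaw_div_const (μ : ℕ → ℝ) (c : ℝ) :
    stepLaw P (fun x => μ x / c) = fun y => stepLaw P μ y / c := by
  funext y
  simp only [stepLaw, div_mul_eq_mul_div]
  exact tsum_div_const

lemma continuous_stepLaw (hcol : ∀ y, ∃ s : Finset ℕ, ∀ x ∉ s, P x y = 0) :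
    Continuous (stepLaw P) := by
  refine continuous_pi fun y => ?_
  obtain ⟨s, hs⟩ := hcol y
  have : (fun μ => stepLaw P μ y) = fun μ => ∑ x ∈ s, μ x * P x y :=
    funext fun μ => stepLaw_eq_sum μ hs
  rw [this]
  exact continuous_finsetSum _ fun x _ => (continuous_apply x).mul continuous_const

lemma exists_stationary_of_stepLaw_eq_self {π : ℕ → ℝ} (hπ0 : ∀ y, 0 ≤ π y)
    (hpos : 0 < ∑' y, π y) (hinv : stepLaw P π = π) :
    ∃ ν : ℕ → ℝ, (∀ y, 0 ≤ ν y) ∧ ∑' y, ν y = 1 ∧ stepLaw P ν = ν := by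
  refine ⟨fun y => π y / ∑' x, π x, fun y => div_nonneg (hπ0 y) hpos.le, ?_, ?_⟩
  · rw [tsum_div_const, div_self hpos.ne']
  · rw [stepLaw_div_const, hinv]

end StepLaw

noncomputable def cesaro (μ : ℕ → ℕ → ℝ) (N y : ℕ) : ℝ :=
  (∑ k ∈ range (N + 1), μ k y) / (N + 1)

section Cesaro

variable {P : ℕ → ℕ → ℝ} {μ : ℕ → ℕ → ℝ}

lemma cesaro_nonneg (hμ0 : ∀ n y, 0 ≤ μ n y) (N y : ℕ) : 0 ≤ cesaro μ N y :=
  div_nonneg (sum_nonneg fun k _ => hμ0 k y) (by positivity)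

lemma sum_range_cesaro_le_one (hμ1 : ∀ n R, ∑ y ∈ range R, μ n y ≤ 1) (N R : ℕ) :
    ∑ y ∈ range R, cesaro μ N y ≤ 1 := by
  unfold cesaro
  rw [← sum_div, sum_comm, div_le_one (by positivity)]
  calc ∑ k ∈ range (N + 1), ∑ y ∈ range R, μ k y
      ≤ ∑ k ∈ range (N + 1), (1 : ℝ) := sum_le_sum fun k _ => hμ1 k R
    _ = N + 1 := by simp

lemma le_sum_range_cesaro {K : ℕ} {δ : ℝ}
    (hocc : ∀ N, δ * N ≤ ∑ k ∈ range N, ∑ y ∈ range K, μ k y) (N : ℕ) :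
    δ ≤ ∑ y ∈ range K, cesaro μ N y := by
  unfold cesaro
  rw [← sum_div, sum_comm, le_div_iff₀ (by positivity)]
  exact_mod_cast hocc (N + 1)

lemma stepLaw_cesaro (hcol : ∀ y, ∃ s : Finset ℕ, ∀ x ∉ s, P x y = 0)
    (hstep : ∀ n, μ (n + 1) = stepLaw P (μ n)) (N y : ℕ) :
    stepLaw P (cesaro μ N) y = cesaro μ N y + (μ (N + 1) y - μ 0 y) / (N + 1) := by
  obtain ⟨s, hs⟩ := hcol y
  have hshift : ∑ k ∈ range (N + 1), μ (k + 1) y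
      = ∑ k ∈ range (N + 1), μ k y + μ (N + 1) y - μ 0 y := by
    linarith [sum_range_succ' (fun k => μ k y) (N + 1), sum_range_succ (fun k => μ k y) (N + 1)]
  calc stepLaw P (cesaro μ N) y
      = (∑ k ∈ range (N + 1), ∑ x ∈ s, μ k x * P x y) / (N + 1) := by
        rw [stepLaw_eq_sum _ hs, sum_comm, sum_div]
        simp only [cesaro, sum_mul, sum_div]
        exact sum_congr rfl fun x _ => sum_congr rfl fun k _ => by ring
    _ = (∑ k ∈ range (N + 1), μ (k + 1) y) / (N + 1) := by
        simp only [hstep, stepLaw_eq_sum _ hs]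
    _ = cesaro μ N y + (μ (N + 1) y - μ 0 y) / (N + 1) := by
        rw [hshift]
        unfold cesaro
        ring

lemma tendsto_sub_div_succ_zero {a b : ℕ → ℝ} (ha : ∀ n, a n ∈ Set.Icc (0 : ℝ) 1)
    (hb : ∀ n, b n ∈ Set.Icc (0 : ℝ) 1) :
    Tendsto (fun n : ℕ => (a n - b n) / (n + 1)) atTop (𝓝 0) := by
  refine squeeze_zero_norm (fun n => ?_) tendsto_one_div_add_atTop_nhds_zero_nat
  rw [Real.norm_eq_abs, abs_div, abs_of_pos (by positivity : (0 : ℝ) < n + 1)]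
  gcongr
  exact abs_le.2 ⟨by linarith [(ha n).1, (hb n).2], by linarith [(ha n).2, (hb n).1]⟩

lemma stepLaw_eq_self_of_tendsto_cesaro (hcol : ∀ y, ∃ s : Finset ℕ, ∀ x ∉ s, P x y = 0)
    (hμ0 : ∀ n y, 0 ≤ μ n y) (hμ1 : ∀ n y, μ n y ≤ 1) (hstep : ∀ n, μ (n + 1) = stepLaw P (μ n))
    {φ : ℕ → ℕ} (hφ : StrictMono φ) {π : ℕ → ℝ}
    (hlim : Tendsto (fun n => cesaro μ (φ n)) atTop (𝓝 π)) :
    stepLaw P π = π := by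
  have herr : Tendsto (fun n y => (μ (φ n + 1) y - μ 0 y) / (φ n + 1)) atTop (𝓝 0) := by
    refine tendsto_pi_nhds.2 fun y => ?_
    have hbd : ∀ n, μ n y ∈ Set.Icc (0 : ℝ) 1 := fun n => ⟨hμ0 n y, hμ1 n y⟩
    exact (tendsto_sub_div_succ_zero (fun n => hbd (n + 1)) fun _ => hbd 0).comp
      hφ.tendsto_atTop
  have hstep_lim : Tendsto (fun n => stepLaw P (cesaro μ (φ n))) atTop (𝓝 π) := by
    have hsplit : (fun n => stepLaw P (cesaro μ (φ n)))
        = fun n => cesaro μ (φ n) + fun y => (μ (φ n + 1) y - μ 0 y) / (φ n + 1) :=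
      funext fun n => funext fun y => stepLaw_cesaro hcol hstep (φ n) y
    simpa [hsplit] using hlim.add herr
  exact tendsto_nhds_unique (((continuous_stepLaw hcol).tendsto π).comp hlim) hstep_lim

theorem exists_stepLaw_eq_self_of_occupation (hcol : ∀ y, ∃ s : Finset ℕ, ∀ x ∉ s, P x y = 0)
    (hμ0 : ∀ n y, 0 ≤ μ n y) (hμ1 : ∀ n R, ∑ y ∈ range R, μ n y ≤ 1)
    (hstep : ∀ n, μ (n + 1) = stepLaw P (μ n)) {K : ℕ} {δ : ℝ}
    (hocc : ∀ N, δ * N ≤ ∑ k ∈ range N, ∑ y ∈ range K, μ k y) :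
    ∃ π : ℕ → ℝ, (∀ y, 0 ≤ π y) ∧ (∀ R, ∑ y ∈ range R, π y ≤ 1) ∧
      δ ≤ ∑ y ∈ range K, π y ∧ stepLaw P π = π := by
  have hle_one : ∀ {ν : ℕ → ℝ}, (∀ y, 0 ≤ ν y) → (∀ R, ∑ y ∈ range R, ν y ≤ 1) → ∀ y, ν y ≤ 1 :=
    fun h0 h1 y => (single_le_sum (fun z _ => h0 z) (self_mem_range_succ y)).trans (h1 (y + 1))
  have hc0 := cesaro_nonneg hμ0
  have hc1 := sum_range_cesaro_le_one hμ1
  obtain ⟨π, -, φ, hφ, hlim⟩ := (isCompact_univ_pi fun _ => isCompact_Icc).tendsto_subseq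
    fun N => Set.mem_univ_pi.2 fun y => ⟨hc0 N y, hle_one (hc0 N) (hc1 N) y⟩
  have hpt := tendsto_pi_nhds.1 hlim
  have hsum : ∀ R, Tendsto (fun n => ∑ y ∈ range R, cesaro μ (φ n) y) atTop
      (𝓝 (∑ y ∈ range R, π y)) := fun R => tendsto_finsetSum _ fun y _ => hpt y
  refine ⟨π, fun y => ge_of_tendsto' (hpt y) fun n => hc0 _ y,
    fun R => le_of_tendsto' (hsum R) fun n => hc1 _ R,
    ge_of_tendsto' (hsum K) fun n => le_sum_range_cesaro hocc _,
    stepLaw_eq_self_of_tendsto_cesaro hcol hμ0 (fun n => hle_one (hμ0 n) (hμ1 n)) hstep hφ hlim⟩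

end Cesaro

noncomputable def lawFromZero (P : ℕ → ℕ → ℝ) (n : ℕ) : ℕ → ℝ :=
  (stepLaw P)^[n] (Pi.single 0 1)

section UpwardBoundedJumps

variable {P : ℕ → ℕ → ℝ} {L : ℕ}

lemma sum_mul_stepLaw (hup : ∀ x y, x + L < y → P x y = 0) {μ : ℕ → ℝ} {m : ℕ}
    (hμ : ∀ x, m ≤ x → μ x = 0) (g : ℕ → ℝ) :
    ∑ y ∈ range (m + L), g y * stepLaw P μ y
      = ∑ x ∈ range m, μ x * ∑ y ∈ range (x + L + 1), P x y * g y := by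
  have hμ' : ∀ x ∉ range m, μ x = 0 := fun x hx => hμ x (by simpa using hx)
  simp_rw [stepLaw_eq_sum_of_support hμ', mul_sum]
  rw [sum_comm]
  refine sum_congr rfl fun x hx => ?_
  rw [eventually_constant_sum (N := x + L + 1) (fun y hy => by rw [hup x y (by omega)]; ring)
    (by simp at hx; omega)]
  exact sum_congr rfl fun y _ => by ring

lemma lawFromZero_succ (n : ℕ) : lawFromZero P (n + 1) = stepLaw P (lawFromZero P n) :=
  Function.iterate_succ_apply' _ _ _

lemma lawFromZero_nonneg (hP0 : ∀ x y, 0 ≤ P x y) (n y : ℕ) : 0 ≤ lawFromZero P n y := by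
  induction n generalizing y with
  | zero => by_cases hy : y = 0 <;> simp [lawFromZero, hy]
  | succ n ih => rw [lawFromZero_succ]; exact tsum_nonneg fun x => mul_nonneg (ih x) (hP0 x y)

lemma lawFromZero_eq_zero (hup : ∀ x y, x + L < y → P x y = 0) {n y : ℕ} (hy : L * n < y) :
    lawFromZero P n y = 0 := by
  induction n generalizing y with
  | zero => simp [lawFromZero, show y ≠ 0 by omega]
  | succ n ih =>
    rw [mul_add_one] at hy
    rw [lawFromZero_succ, stepLaw_eq_sum_of_support (s := range (L * n + 1))
      (fun x hx => ih (by simpa using hx))]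
    exact sum_eq_zero fun x hx => by rw [hup x y (by simp at hx; omega), mul_zero]

lemma sum_lawFromZero (hup : ∀ x y, x + L < y → P x y = 0)
    (hrow : ∀ x, ∑ y ∈ range (x + L + 1), P x y = 1) (n : ℕ) :
    ∑ y ∈ range (L * n + 1), lawFromZero P n y = 1 := by
  induction n with
  | zero => simp [lawFromZero]
  | succ n ih =>
    have h := sum_mul_stepLaw (m := L * n + 1) hup
      (fun x hx => lawFromZero_eq_zero (n := n) (y := x) hup (by omega)) fun _ => 1
    simp only [one_mul, mul_one, hrow] at h
    rwa [lawFromZero_succ, show L * (n + 1) + 1 = L * n + 1 + L by ring, h]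

lemma sum_range_lawFromZero_le_one (hP0 : ∀ x y, 0 ≤ P x y)
    (hup : ∀ x y, x + L < y → P x y = 0) (hrow : ∀ x, ∑ y ∈ range (x + L + 1), P x y = 1)
    (n R : ℕ) : ∑ y ∈ range R, lawFromZero P n y ≤ 1 := by
  calc ∑ y ∈ range R, lawFromZero P n y
      ≤ ∑ y ∈ range (max R (L * n + 1)), lawFromZero P n y :=
        sum_le_sum_of_subset_of_nonneg (range_subset_range.2 (le_max_left _ _))
          fun y _ _ => lawFromZero_nonneg hP0 n y
    _ = 1 := by
        rw [eventually_constant_sum (fun y hy => lawFromZero_eq_zero hup hy) (le_max_right _ _),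
          sum_lawFromZero hup hrow]

variable {K : ℕ} {ε : ℝ}

lemma sum_mul_le_of_drift (hP0 : ∀ x y, 0 ≤ P x y) (hrow : ∀ x, ∑ y ∈ range (x + L + 1), P x y = 1)
    (hdrift : ∀ x, K ≤ x → ∑ y ∈ range (x + L + 1), P x y * ((y : ℝ) - x) ≤ -ε) (x : ℕ) :
    ∑ y ∈ range (x + L + 1), P x y * (y : ℝ) ≤ x - ε + if x < K then L + ε else 0 := by
  split_ifs with hx
  · calc ∑ y ∈ range (x + L + 1), P x y * (y : ℝ)
        ≤ ∑ y ∈ range (x + L + 1), P x y * (x + L : ℝ) := by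
          refine sum_le_sum fun y hy => mul_le_mul_of_nonneg_left ?_ (hP0 x y)
          exact_mod_cast Nat.lt_succ_iff.1 (mem_range.1 hy)
      _ = x - ε + (L + ε) := by rw [← sum_mul, hrow]; ring
  · have h := hdrift x (not_lt.1 hx)
    simp only [mul_sub, sum_sub_distrib, ← sum_mul, hrow] at h
    linarith

lemma sum_mul_lawFromZero_succ_le (hP0 : ∀ x y, 0 ≤ P x y) (hup : ∀ x y, x + L < y → P x y = 0)
    (hrow : ∀ x, ∑ y ∈ range (x + L + 1), P x y = 1) (hε : 0 ≤ ε)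
    (hdrift : ∀ x, K ≤ x → ∑ y ∈ range (x + L + 1), P x y * ((y : ℝ) - x) ≤ -ε) (k : ℕ) :
    ∑ y ∈ range (L * (k + 1) + 1), (y : ℝ) * lawFromZero P (k + 1) y
      ≤ ∑ y ∈ range (L * k + 1), (y : ℝ) * lawFromZero P k y - ε
        + (L + ε) * ∑ y ∈ range K, lawFromZero P k y := by
  have hsupp : ∀ x, L * k + 1 ≤ x → lawFromZero P k x = 0 :=
    fun x hx => lawFromZero_eq_zero hup (by omega)
  have hnear : ∑ x ∈ range (L * k + 1), (if x < K then lawFromZero P k x else 0)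
      ≤ ∑ x ∈ range K, lawFromZero P k x := by
    rw [← sum_filter]
    exact sum_le_sum_of_subset_of_nonneg (fun x hx => mem_range.2 (mem_filter.1 hx).2)
      fun x _ _ => lawFromZero_nonneg hP0 k x
  rw [show L * (k + 1) + 1 = L * k + 1 + L by ring, lawFromZero_succ,
    sum_mul_stepLaw hup hsupp]
  calc ∑ x ∈ range (L * k + 1), lawFromZero P k x * ∑ y ∈ range (x + L + 1), P x y * (y : ℝ)
      ≤ ∑ x ∈ range (L * k + 1), lawFromZero P k x * (x - ε + if x < K then L + ε else 0) :=
        sum_le_sum fun x _ => mul_le_mul_of_nonneg_left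
          (sum_mul_le_of_drift hP0 hrow hdrift x) (lawFromZero_nonneg hP0 k x)
    _ = ∑ x ∈ range (L * k + 1), (x : ℝ) * lawFromZero P k x
          - ε * ∑ x ∈ range (L * k + 1), lawFromZero P k x
          + (L + ε) * ∑ x ∈ range (L * k + 1), (if x < K then lawFromZero P k x else 0) := by
        simp only [mul_sum, ← sum_sub_distrib, ← sum_add_distrib]
        exact sum_congr rfl fun x _ => by split_ifs <;> ring
    _ ≤ _ := by
        rw [sum_lawFromZero hup hrow, mul_one]
        gcongr

lemma mul_le_occupation_of_drift (hP0 : ∀ x y, 0 ≤ P x y)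
    (hup : ∀ x y, x + L < y → P x y = 0) (hrow : ∀ x, ∑ y ∈ range (x + L + 1), P x y = 1)
    (hε : 0 ≤ ε) (hdrift : ∀ x, K ≤ x → ∑ y ∈ range (x + L + 1), P x y * ((y : ℝ) - x) ≤ -ε)
    (N : ℕ) : ε * N ≤ (L + ε) * ∑ k ∈ range N, ∑ y ∈ range K, lawFromZero P k y := by
  set mean : ℕ → ℝ := fun k => ∑ y ∈ range (L * k + 1), (y : ℝ) * lawFromZero P k y
  have hmean0 : mean 0 = 0 := by simp [mean]
  have hmeanN : 0 ≤ mean N :=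
    sum_nonneg fun y _ => mul_nonneg y.cast_nonneg (lawFromZero_nonneg hP0 N y)
  have htelescope := sum_range_sub' mean N
  calc ε * N = ∑ k ∈ range N, ε := by simp [mul_comm]
    _ ≤ ∑ k ∈ range N, (mean k - mean (k + 1) + (L + ε) * ∑ y ∈ range K, lawFromZero P k y) :=
        sum_le_sum fun k _ => by
          linarith [sum_mul_lawFromZero_succ_le hP0 hup hrow hε hdrift k]
    _ ≤ (L + ε) * ∑ k ∈ range N, ∑ y ∈ range K, lawFromZero P k y := by
        rw [sum_add_distrib, htelescope, hmean0, ← mul_sum]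
        linarith

theorem exists_stationary_of_drift (hP0 : ∀ x y, 0 ≤ P x y)
    (hup : ∀ x y, x + L < y → P x y = 0) (hrow : ∀ x, ∑ y ∈ range (x + L + 1), P x y = 1)
    (hcol : ∀ y, ∃ s : Finset ℕ, ∀ x ∉ s, P x y = 0) (hε : 0 < ε)
    (hdrift : ∀ x, K ≤ x → ∑ y ∈ range (x + L + 1), P x y * ((y : ℝ) - x) ≤ -ε) :
    ∃ π : ℕ → ℝ, (∀ y, 0 ≤ π y) ∧ ∑' y, π y = 1 ∧ stepLaw P π = π := by
  have hLε : 0 < (L : ℝ) + ε := by positivity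
  obtain ⟨π, hπ0, hπ1, hπK, hπ⟩ := exists_stepLaw_eq_self_of_occupation hcol
    (lawFromZero_nonneg hP0) (sum_range_lawFromZero_le_one hP0 hup hrow) lawFromZero_succ
    (δ := ε / (L + ε)) fun N => by
      rw [div_mul_eq_mul_div, div_le_iff₀ hLε, mul_comm _ ((L : ℝ) + ε)]
      exact mul_le_occupation_of_drift hP0 hup hrow hε.le hdrift N
  have hsummable : Summable π := summable_of_sum_range_le hπ0 hπ1
  refine exists_stationary_of_stepLaw_eq_self hπ0 ?_ hπ
  calc (0 : ℝ) < ε / (L + ε) := by positivity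
    _ ≤ ∑ y ∈ range K, π y := hπK
    _ ≤ ∑' y, π y := hsummable.sum_le_tsum _ fun y _ => hπ0 y

end UpwardBoundedJumps

section Chain

variable {M : ℕ} {q r r' p : ℝ} {u : ℕ → ℕ}

lemma mixP_eq_eval (d : ℕ) :
    mixP M q r r' d
      = q * (bernsteinPolynomial ℝ M d).eval r + (1 - q) * (bernsteinPolynomial ℝ M d).eval r' := by
  simp only [mixP, bernsteinPolynomial, eval_mul, eval_pow, eval_sub, eval_one, eval_X,
    eval_natCast]
  ring

lemma mixP_nonneg (hq0 : 0 ≤ q) (hq1 : q ≤ 1) (hr0 : 0 ≤ r) (hr1 : r ≤ 1) (hr'0 : 0 ≤ r')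
    (hr'1 : r' ≤ 1) (d : ℕ) : 0 ≤ mixP M q r r' d := by
  have := sub_nonneg.2 hq1
  have := sub_nonneg.2 hr1
  have := sub_nonneg.2 hr'1
  unfold mixP
  positivity

lemma sum_mixP : ∑ d ∈ range (M + 1), mixP M q r r' d = 1 := by
  simp only [mixP_eq_eval, sum_add_distrib, ← mul_sum, ← eval_finsetSum,
    bernsteinPolynomial.sum, eval_one]
  ring

lemma sum_mul_mixP :
    ∑ d ∈ range (M + 1), (d : ℝ) * mixP M q r r' d = M * (q * r + (1 - q) * r') := by
  have hmean : ∀ t : ℝ,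
      ∑ d ∈ range (M + 1), (d : ℝ) * (bernsteinPolynomial ℝ M d).eval t = M * t := by
    intro t
    simpa [eval_finsetSum] using congrArg (eval t) (bernsteinPolynomial.sum_smul ℝ M)
  simp only [mixP_eq_eval, mul_add, sum_add_distrib, mul_left_comm _ q, mul_left_comm _ (1 - q),
    ← mul_sum, hmean]

lemma Pd_nonneg (hq0 : 0 ≤ q) (hq1 : q ≤ 1) (hr0 : 0 ≤ r) (hr1 : r ≤ 1) (hr'0 : 0 ≤ r')
    (hr'1 : r' ≤ 1) (x d : ℕ) : 0 ≤ Pd M q r r' x d := by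
  have := mixP_nonneg (M := M) hq0 hq1 hr0 hr1 hr'0 hr'1
  unfold Pd
  split_ifs
  exacts [this d, sum_nonneg fun e _ => this e, le_rfl]

lemma sum_Pd (x : ℕ) : ∑ d ∈ range (min x M + 1), Pd M q r r' x d = 1 := by
  have hlt : ∀ d ∈ range (min x M), Pd M q r r' x d = mixP M q r r' d :=
    fun d hd => if_pos (mem_range.1 hd)
  rw [sum_range_succ, sum_congr rfl hlt, Pd, if_neg (lt_irrefl _), if_pos rfl,
    ← Ico_add_one_right_eq_Icc, sum_range_add_sum_Ico _ (by omega), sum_mixP]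

lemma Pd_eq_mixP {x : ℕ} (hx : M ≤ x) {d : ℕ} (hd : d ≤ M) : Pd M q r r' x d = mixP M q r r' d := by
  rcases hd.lt_or_eq with hd | rfl
  · simp [Pd, min_eq_right hx, hd]
  · simp [Pd, min_eq_right hx]

lemma sum_transP_mul (hu : ∀ x, u x ≤ 1) (x : ℕ) (g : ℕ → ℝ) :
    ∑ y ∈ range (x + 1 + 1), transP M q r r' p u x y * g y
      = ∑ d ∈ range (min x M + 1),
          Pd M q r r' x d * (p * g (x - d + u x) + (1 - p) * g (x - d)) := by
  unfold transP
  simp_rw [sum_mul]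
  rw [sum_comm]
  refine sum_congr rfl fun d hd => ?_
  have h1 : x - d + u x ∈ range (x + 1 + 1) := mem_range.2 (by have := hu x; omega)
  have h2 : x - d ∈ range (x + 1 + 1) := mem_range.2 (by omega)
  simp only [mul_add, add_mul, sum_add_distrib, mul_ite, ite_mul, mul_one, mul_zero, zero_mul,
    sum_ite_eq', h1, h2, if_true]
  ring

lemma transP_nonneg (hq0 : 0 ≤ q) (hq1 : q ≤ 1) (hr0 : 0 ≤ r) (hr1 : r ≤ 1) (hr'0 : 0 ≤ r')
    (hr'1 : r' ≤ 1) (hp0 : 0 ≤ p) (hp1 : p ≤ 1) (x y : ℕ) : 0 ≤ transP M q r r' p u x y := by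
  have := sub_nonneg.2 hp1
  refine sum_nonneg fun d _ => mul_nonneg (Pd_nonneg hq0 hq1 hr0 hr1 hr'0 hr'1 x d) ?_
  split_ifs <;> positivity

lemma transP_eq_zero_of_add_one_lt (hu : ∀ x, u x ≤ 1) {x y : ℕ} (h : x + 1 < y) :
    transP M q r r' p u x y = 0 :=
  sum_eq_zero fun d _ => by
    rw [if_neg (by have := hu x; omega), if_neg (by omega)]
    ring

lemma transP_eq_zero_of_add_lt {x y : ℕ} (h : y + M < x) : transP M q r r' p u x y = 0 :=
  sum_eq_zero fun d hd => by
    have := mem_range.1 hd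
    rw [if_neg (by omega), if_neg (by omega)]
    ring

lemma sum_transP (hu : ∀ x, u x ≤ 1) (x : ℕ) :
    ∑ y ∈ range (x + 1 + 1), transP M q r r' p u x y = 1 := by
  have h := sum_transP_mul (M := M) (q := q) (r := r) (r' := r') (p := p) hu x fun _ => 1
  simp only [mul_one, add_sub_cancel] at h
  rw [h, sum_Pd]

lemma sum_transP_mul_sub (hu : ∀ x, u x ≤ 1) {x : ℕ} (hx : M ≤ x) :
    ∑ y ∈ range (x + 1 + 1), transP M q r r' p u x y * ((y : ℝ) - x)
      = p * u x - M * (q * r + (1 - q) * r') := by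
  rw [sum_transP_mul hu, min_eq_right hx]
  calc ∑ d ∈ range (M + 1), Pd M q r r' x d * (p * (((x - d + u x : ℕ) : ℝ) - x)
          + (1 - p) * (((x - d : ℕ) : ℝ) - x))
      = ∑ d ∈ range (M + 1), (p * u x * mixP M q r r' d - d * mixP M q r r' d) := by
        refine sum_congr rfl fun d hd => ?_
        have hdM : d ≤ M := Nat.lt_succ_iff.1 (mem_range.1 hd)
        rw [Pd_eq_mixP hx hdM]
        push_cast [hdM.trans hx]
        ring
    _ = p * u x - M * (q * r + (1 - q) * r') := by
        rw [sum_sub_distrib, ← mul_sum, sum_mixP, sum_mul_mixP, mul_one]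

end Chain

theorem foster_lyapunov_positive_recurrent_general
    (M : ℕ)
    (q r r' p : ℝ) (hq0 : 0 ≤ q) (hq1 : q ≤ 1) (hr0 : 0 ≤ r) (hr1 : r ≤ 1)
    (hr'0 : 0 ≤ r') (hr'1 : r' ≤ 1) (hp0 : 0 ≤ p) (hp1 : p ≤ 1)
    (hstab : p < (M : ℝ) * (q * r + (1 - q) * r'))
    (u : ℕ → ℕ) (hu : ∀ x, u x ≤ 1) :
    (∃ c : ℝ, ∀ x : ℕ, c ≤ (x : ℝ))
    ∧ (∀ x : ℕ, x < M → Summable (fun y : ℕ => transP M q r r' p u x y * (y : ℝ)))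
    ∧ (∃ ε : ℝ, 0 < ε ∧ ∀ x : ℕ, M ≤ x →
        (∑' y : ℕ, transP M q r r' p u x y * ((y : ℝ) - (x : ℝ))) ≤ -ε)
    ∧ (∃ π : ℕ → ℝ, (∀ y, 0 ≤ π y) ∧ (∑' y : ℕ, π y) = 1
        ∧ ∀ y : ℕ, (∑' x : ℕ, π x * transP M q r r' p u x y) = π y) := by
  have hε : 0 < M * (q * r + (1 - q) * r') - p := sub_pos.2 hstab
  have hsupp : ∀ x y, y ∉ range (x + 1 + 1) → transP M q r r' p u x y = 0 :=
    fun x y hy => transP_eq_zero_of_add_one_lt hu (by simpa using hy)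
  have hdrift : ∀ x, M ≤ x → ∑ y ∈ range (x + 1 + 1), transP M q r r' p u x y * ((y : ℝ) - x)
      ≤ -(M * (q * r + (1 - q) * r') - p) := fun x hx => by
    rw [sum_transP_mul_sub hu hx]
    linarith [mul_le_of_le_one_right hp0 (Nat.cast_le_one.2 (hu x))]
  refine ⟨⟨0, fun x => x.cast_nonneg⟩,
    fun x _ => summable_of_ne_finset_zero fun y hy => by rw [hsupp x y hy, zero_mul],
    ⟨_, hε, fun x hx => ?_⟩, ?_⟩
  · rw [tsum_eq_sum fun y hy => by rw [hsupp x y hy, zero_mul]]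
    exact hdrift x hx
  · obtain ⟨π, hπ0, hπ1, hπ⟩ := exists_stationary_of_drift (L := 1)
      (transP_nonneg hq0 hq1 hr0 hr1 hr'0 hr'1 hp0 hp1)
      (fun _ _ => transP_eq_zero_of_add_one_lt hu) (sum_transP hu)
      (fun y => ⟨range (y + M + 1), fun _ hx => transP_eq_zero_of_add_lt (by simpa using hx)⟩)
      hε hdrift
    exact ⟨π, hπ0, hπ1, congrFun hπ⟩

/-- Foster–Lyapunov conditions for `θ(x) = x` under `p < M(qr + (1−q)r')`, and
the resulting positive recurrence (existence of a stationary distribution). -/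
theorem foster_lyapunov_positive_recurrent
    (M : ℕ) (hM : 1 ≤ M)
    (q r r' p : ℝ) (hq0 : 0 ≤ q) (hq1 : q ≤ 1) (hr0 : 0 ≤ r) (hr1 : r ≤ 1)
    (hr'0 : 0 ≤ r') (hr'1 : r' ≤ 1) (hp0 : 0 ≤ p) (hp1 : p ≤ 1)
    (hstab : p < (M : ℝ) * (q * r + (1 - q) * r'))
    (u : ℕ → ℕ) (hu : ∀ x, u x ≤ 1) :
    (∃ c : ℝ, ∀ x : ℕ, c ≤ (x : ℝ))
    ∧ (∀ x : ℕ, x < M → Summable (fun y : ℕ => transP M q r r' p u x y * (y : ℝ)))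
    ∧ (∃ ε : ℝ, 0 < ε ∧ ∀ x : ℕ, M ≤ x →
        (∑' y : ℕ, transP M q r r' p u x y * ((y : ℝ) - (x : ℝ))) ≤ -ε)
    ∧ (∃ π : ℕ → ℝ, (∀ y, 0 ≤ π y) ∧ (∑' y : ℕ, π y) = 1
        ∧ ∀ y : ℕ, (∑' x : ℕ, π x * transP M q r r' p u x y) = π y) :=
  foster_lyapunov_positive_recurrent_general M q r r' p hq0 hq1 hr0 hr1 hr'0 hr'1 hp0 hp1 hstab u hu
end

section
/- Suppose for each tax λ ∈ ℝ the optimal admission policy of the single-BS MDP is a threshold policy with threshold t(λ), and the average cost of the threshold-t policy is f(λ,t) = C Σ_{q=0}^∞ q v_t(q) + λ Σ_{q=t+1}^∞ v_t(q), where v_t is the stationary distribution under threshold t. If f is submodular in (λ,t), then the set of passive states { t(λ)+1, t(λ)+2, … } decreases monotonically (in the sense of set inclusion) from all of ℕ to the empty set as λ increases from −∞ to +∞; hence the problem is Whittle indexable. -/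
/-- If the optimal admission policy is a threshold policy whose threshold
`t(λ)` is the least minimizer of the average cost
`f(λ,s) = C Σ_q q v_s(q) + λ Σ_{q ≥ s+1} v_s(q)`, and `f` is submodular, then
the set of passive states `{t(λ)+1, t(λ)+2, …}` decreases monotonically (for
set inclusion) as the tax `λ` increases: the problem is Whittle indexable. -/
theorem whittle_indexable_of_submodular
    (C : ℝ) (v : ℕ → ℕ → ℝ) (t : ℝ → ℕ) (f : ℝ → ℕ → ℝ)
    (hf : ∀ (lam : ℝ) (s : ℕ),
      f lam s = C * (∑' q : ℕ, (q : ℝ) * v s q)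
        + lam * (∑' q : ℕ, if s + 1 ≤ q then v s q else 0))
    (hopt : ∀ lam : ℝ, (∀ s : ℕ, f lam (t lam) ≤ f lam s)
      ∧ ∀ s : ℕ, (∀ s' : ℕ, f lam s ≤ f lam s') → t lam ≤ s)
    (hsub : ∀ lam1 lam2 : ℝ, lam2 < lam1 → ∀ s1 s2 : ℕ, s2 < s1 →
      f lam1 s1 + f lam2 s2 ≤ f lam1 s2 + f lam2 s1) :
    ∀ lam1 lam2 : ℝ, lam2 ≤ lam1 →
      {x : ℕ | t lam1 < x} ⊆ {x : ℕ | t lam2 < x} := by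
  intro lam1 lam2 hle
  have hmono : t lam2 ≤ t lam1 := by
    rcases eq_or_lt_of_le hle with heq | hlt
    · simp [heq]
    by_contra h
    push_neg at h
    have hsub' := hsub lam1 lam2 hlt (t lam2) (t lam1) h
    have h1 := (hopt lam1).1 (t lam2)
    have h2 := (hopt lam2).1 (t lam1)
    have hmin : ∀ s' : ℕ, f lam2 (t lam1) ≤ f lam2 s' := by
      intro s'
      have : f lam2 (t lam1) ≤ f lam2 (t lam2) := by linarith
      exact this.trans ((hopt lam2).1 s')
    exact absurd ((hopt lam2).2 (t lam1) hmin) (not_le.mpr h)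
  intro x hx
  exact lt_of_le_of_lt hmono hx
end
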